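/- Every linear [n,2] MDS code C over a finite field F = GF(q) is 2-MDS; that is, for any three distinct vectors e_0, e_1, e_2 in the same coset of C within F^n, one has w(e_0) + w(e_1) + w(e_2) ≥ 2n - 3 > 2(n-2). -/

import Mathlib

/-- The minimum Hamming distance of a linear code `C`, i.e. the minimum
Hamming weight of a nonzero codeword of `C`. -/
noncomputable def minHammingDist {F : Type*} [Field F] [DecidableEq F]
    {ι : Type*} [Fintype ι] (C : Submodule F (ι → F)) : ℕ :=
  sInf {w : ℕ | ∃ c ∈ C, c ≠ 0 ∧ hammingNorm c = w}

/-- A linear code of dimension `k` in `F^ι` is MDS if its minimum Hamming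
distance equals `n - k + 1`, where `n = |ι|`. -/
noncomputable def IsMDSCode {F : Type*} [Field F] [DecidableEq F]
    {ι : Type*} [Fintype ι] (k : ℕ) (C : Submodule F (ι → F)) : Prop :=
  minHammingDist C = Fintype.card ι - k + 1

lemma aux_card_three {n : ℕ} (Z₀ Z₁ Z₂ : Finset (Fin n)) :
    Z₀.card + Z₁.card + Z₂.card ≤
      n + ((Z₀ ∩ Z₁).card + (Z₀ ∩ Z₂).card + (Z₁ ∩ Z₂).card) := by
  have h1 := Finset.card_union_add_card_inter Z₀ Z₁
  have h2 := Finset.card_union_add_card_inter (Z₀ ∪ Z₁) Z₂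
  have h3 : ((Z₀ ∪ Z₁) ∩ Z₂).card ≤ (Z₀ ∩ Z₂).card + (Z₁ ∩ Z₂).card := by
    rw [Finset.union_inter_distrib_right]
    exact Finset.card_union_le _ _
  have h4 : (Z₀ ∪ Z₁ ∪ Z₂).card ≤ n := by
    simpa using Finset.card_le_univ (Z₀ ∪ Z₁ ∪ Z₂)
  omega

/-- Example `LMDSk=2,L=2`: every linear `[n,2]` MDS code
over a finite field is `2`-MDS: any three distinct vectors `e₀, e₁, e₂` in a
common coset satisfy `w(e₀) + w(e₁) + w(e₂) ≥ 2n - 3 > 2(n-2)`. -/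
theorem stmt19 {F : Type*} [Field F] [Fintype F] [DecidableEq F]
    {n : ℕ} (C : Submodule F (Fin n → F))
    (hk : Module.finrank F C = 2)
    (hMDS : IsMDSCode 2 C)
    (e₀ e₁ e₂ : Fin n → F)
    (h01 : e₀ ≠ e₁) (h02 : e₀ ≠ e₂) (h12 : e₁ ≠ e₂)
    (hc01 : e₀ - e₁ ∈ C) (hc02 : e₀ - e₂ ∈ C) :
    2 * n - 3 ≤ hammingNorm e₀ + hammingNorm e₁ + hammingNorm e₂ ∧
      2 * (n - 2) < 2 * n - 3 := by
  classical
  have hn : 2 ≤ n := by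
    have h1 := Submodule.finrank_le C
    rw [hk, Module.finrank_fin_fun] at h1
    exact h1
  have hmin : minHammingDist C = n - 1 := by
    have h := hMDS
    unfold IsMDSCode at h
    rw [Fintype.card_fin] at h
    omega
  have hc12 : e₁ - e₂ ∈ C := by
    have : (e₀ - e₂) - (e₀ - e₁) = e₁ - e₂ := by ring
    exact this ▸ Submodule.sub_mem C hc02 hc01
  -- each nonzero codeword has weight ≥ n - 1
  have key : ∀ x y : Fin n → F, x ≠ y → x - y ∈ C →
      ({j | x j = y j} : Finset (Fin n)).card ≤ 1 := by
    intro x y hxy hmem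
    have hw : n - 1 ≤ hammingNorm (x - y) := by
      rw [← hmin]
      exact Nat.sInf_le ⟨x - y, hmem, sub_ne_zero.mpr hxy, rfl⟩
    have hdist : hammingDist x y = hammingNorm (x - y) := by
      rw [hammingDist_comm, hammingDist_eq_hammingNorm, neg_add_eq_sub]
    have hsum : ({j | x j = y j} : Finset (Fin n)).card + hammingDist x y = n := by
      have := Finset.card_filter_add_card_filter_not
        (s := (Finset.univ : Finset (Fin n))) (p := fun j => x j = y j)
      simpa [hammingDist] using this
    omega
  set Z₀ : Finset (Fin n) := {j | e₀ j = 0} with hZ0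
  set Z₁ : Finset (Fin n) := {j | e₁ j = 0} with hZ1
  set Z₂ : Finset (Fin n) := {j | e₂ j = 0} with hZ2
  have hw₀ : hammingNorm e₀ + Z₀.card = n := by
    have := Finset.card_filter_add_card_filter_not
      (s := (Finset.univ : Finset (Fin n))) (p := fun j => e₀ j ≠ 0)
    simpa [hammingNorm, hZ0] using this
  have hw₁ : hammingNorm e₁ + Z₁.card = n := by
    have := Finset.card_filter_add_card_filter_not
      (s := (Finset.univ : Finset (Fin n))) (p := fun j => e₁ j ≠ 0)
    simpa [hammingNorm, hZ1] using this
  have hw₂ : hammingNorm e₂ + Z₂.card = n := by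
    have := Finset.card_filter_add_card_filter_not
      (s := (Finset.univ : Finset (Fin n))) (p := fun j => e₂ j ≠ 0)
    simpa [hammingNorm, hZ2] using this
  have hsub : ∀ (x y : Fin n → F),
      ({j | x j = 0} : Finset (Fin n)) ∩ ({j | y j = 0} : Finset (Fin n)) ⊆
        ({j | x j = y j} : Finset (Fin n)) := by
    intro x y j hj
    simp only [Finset.mem_inter, Finset.mem_filter] at hj ⊢
    exact ⟨Finset.mem_univ j, hj.1.2.trans hj.2.2.symm⟩
  have h01' : (Z₀ ∩ Z₁).card ≤ 1 :=
    le_trans (Finset.card_le_card (hsub e₀ e₁)) (key e₀ e₁ h01 hc01)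
  have h02' : (Z₀ ∩ Z₂).card ≤ 1 :=
    le_trans (Finset.card_le_card (hsub e₀ e₂)) (key e₀ e₂ h02 hc02)
  have h12' : (Z₁ ∩ Z₂).card ≤ 1 :=
    le_trans (Finset.card_le_card (hsub e₁ e₂)) (key e₁ e₂ h12 hc12)
  have := aux_card_three Z₀ Z₁ Z₂
  omega
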